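/- Let M, L, d̂ ≥ 1 be integers and fix U⁰ ∈ ℝ^M. Let S ∈ ℝ^{M × d̂M} admit a right inverse S⁺ ∈ ℝ^{d̂M × M} (i.e., S·S⁺ = I_M) such that ReLU(S⁺S·z) = S⁺S·ReLU(z) for all z ∈ ℝ^{d̂M}. Let B ∈ ℝ^{d̂M × 2M}, A ∈ ℝ^{d̂M}, and let D ∈ ℝ^{M × M} be any matrix. Then there exist a positive integer d_h, a lifting matrix P ∈ ℝ^{d_h·M × 2M}, an iterative-layer weight matrix V ∈ ℝ^{d_h × d_h} and bias vector C ∈ ℝ^{d_h·M}, and a projection matrix Q ∈ ℝ^{M × d_h·M}, such that for every G ∈ ℝ^M the network output Q · 𝒥^L(P·[U⁰; G]) equals V^L(G), where 𝒥(H) := H + (1/L)·ReLU((𝟙_{M×M} ⊗ V)·H + C) and the perturbed iteration is V^0(G) := U⁰, V^{l+1}(G) := V^l(G) + S·ReLU(B·[V^l(G); D·G] + A). -/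

import Mathlib

/-!
The network keeps its hidden state constant across the `M` grid points, so on such states
`𝟙_{M×M} ⊗ V` acts as `M • V` on a single channel vector and each layer is a residual ReLU
layer on channels. The channels carry `[S⁺ Vˡ; D G]`: since `S S⁺ = 1`, `Vˡ` is recovered as
`S (S⁺ Vˡ)`, and the increment `S⁺ S ReLU(z) = ReLU(S⁺ S z)` is the ReLU of an affine function
of the channel state; the step size `1/L` is absorbed into the weights by positive homogeneity
of ReLU. Each of the two embeddings (iteration into channels, channels into the grid)
semiconjugates one step into one layer, hence `L` steps into `L` layers.
-/

open scoped Kronecker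

/-- The rectified linear unit applied componentwise. -/
def relu {n : Type*} (z : n → ℝ) : n → ℝ := fun i => max (z i) 0

/-- The all-ones `M × M` matrix `𝟙_{M×M}`. -/
def onesMat (M : ℕ) : Matrix (Fin M) (Fin M) ℝ := Matrix.of fun _ _ => (1 : ℝ)

open Matrix

noncomputable section

section Relu

variable {ι κ : Type*}

theorem relu_smul_of_nonneg {a : ℝ} (ha : 0 ≤ a) (z : ι → ℝ) : relu (a • z) = a • relu z := by
  funext i
  simp only [relu, Pi.smul_apply, smul_eq_mul, mul_max_of_nonneg _ _ ha, mul_zero]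

theorem relu_sumElim (x : ι → ℝ) (y : κ → ℝ) :
    relu (Sum.elim x y) = Sum.elim (relu x) (relu y) := by
  funext i
  cases i <;> rfl

theorem relu_zero : relu (0 : ι → ℝ) = 0 := by
  funext i
  simp [relu]

end Relu

def resReluLayer {ι : Type*} [Fintype ι] (t : ℝ) (W : Matrix ι ι ℝ) (b : ι → ℝ) (x : ι → ℝ) :
    ι → ℝ :=
  x + t • relu (W *ᵥ x + b)

section Grid

variable (M : ℕ) {κ κ' : Type*} (e : κ' ≃ κ)

def broadcast (ψ : κ → ℝ) : Fin M × κ' → ℝ := fun p => ψ (e p.2)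

def gridAverage {m : Type*} (R : Matrix m κ ℝ) : Matrix m (Fin M × κ') ℝ :=
  Matrix.of fun i p => (M : ℝ)⁻¹ * R i (e p.2)

theorem submatrix_mulVec_broadcast {ι : Type*} [Fintype ι] (K : Matrix κ ι ℝ) (x : ι → ℝ) :
    K.submatrix (fun p : Fin M × κ' => e p.2) id *ᵥ x = broadcast M e (K *ᵥ x) :=
  rfl

variable [Fintype κ] [Fintype κ']

theorem onesMat_kronecker_mulVec_broadcast (V : Matrix κ κ ℝ) (ψ : κ → ℝ) :
    (onesMat M ⊗ₖ V.submatrix e e) *ᵥ broadcast M e ψ = broadcast M e (((M : ℝ) • V) *ᵥ ψ) := by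
  funext p
  have hchannel : ∑ c : κ', V (e p.2) (e c) * ψ (e c) = (V *ᵥ ψ) (e p.2) :=
    e.sum_comp fun k => V (e p.2) k * ψ k
  show ∑ q : Fin M × κ', onesMat M p.1 q.1 * V (e p.2) (e q.2) * ψ (e q.2) = _
  simp only [Fintype.sum_prod_type, onesMat, of_apply, one_mul, hchannel, Finset.sum_const,
    Finset.card_univ, Fintype.card_fin, nsmul_eq_mul, broadcast, smul_mulVec, Pi.smul_apply,
    smul_eq_mul]

theorem semiconj_broadcast_resReluLayer (t : ℝ) (V : Matrix κ κ ℝ) (c : κ → ℝ) :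
    Function.Semiconj (broadcast M e) (resReluLayer t ((M : ℝ) • V) c)
      (resReluLayer t (onesMat M ⊗ₖ V.submatrix e e) (broadcast M e c)) := by
  intro ψ
  rw [resReluLayer, resReluLayer, onesMat_kronecker_mulVec_broadcast]
  rfl

theorem gridAverage_mulVec_broadcast (hM : M ≠ 0) {m : Type*} (R : Matrix m κ ℝ) (ψ : κ → ℝ) :
    gridAverage M e R *ᵥ broadcast M e ψ = R *ᵥ ψ := by
  funext i
  have hchannel : ∑ c : κ', R i (e c) * ψ (e c) = (R *ᵥ ψ) i :=
    e.sum_comp fun k => R i k * ψ k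
  show ∑ q : Fin M × κ', (M : ℝ)⁻¹ * R i (e q.2) * ψ (e q.2) = _
  simp only [mul_assoc, ← Finset.mul_sum, Fintype.sum_prod_type, hchannel, Finset.sum_const,
    Finset.card_univ, Fintype.card_fin, nsmul_eq_mul]
  field_simp

end Grid

section Channel

variable {m m' n : Type*} [Fintype m] [Fintype m'] [Fintype n]
  [DecidableEq m] (S : Matrix m n ℝ) (Sp : Matrix n m ℝ) (B : Matrix n (m ⊕ m') ℝ) (A : n → ℝ)
  (g : m' → ℝ)

def perturbedStep (v : m → ℝ) : m → ℝ := v + S *ᵥ relu (B *ᵥ Sum.elim v g + A)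

def embedState (v : m → ℝ) : n ⊕ m' → ℝ := Sum.elim (Sp *ᵥ v) g

theorem fromCols_zero_mulVec_embedState (hRightInv : S * Sp = 1) (v : m → ℝ) :
    fromCols S 0 *ᵥ embedState Sp g v = v := by
  rw [embedState, fromCols_mulVec_sumElim, zero_mulVec, add_zero, mulVec_mulVec, hRightInv,
    one_mulVec]

variable [DecidableEq m']

def channelWeight (t : ℝ) : Matrix (n ⊕ m') (n ⊕ m') ℝ :=
  fromRows (t⁻¹ • (Sp * S * B * fromBlocks S 0 0 1)) 0

def channelBias (t : ℝ) : n ⊕ m' → ℝ := Sum.elim (t⁻¹ • (Sp * S) *ᵥ A) 0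

theorem semiconj_embedState_perturbedStep {t : ℝ} (ht : 0 < t) (hRightInv : S * Sp = 1)
    (hReluComm : ∀ z, relu ((Sp * S) *ᵥ z) = (Sp * S) *ᵥ relu z) :
    Function.Semiconj (embedState Sp g) (perturbedStep S B A g)
      (resReluLayer t (channelWeight S Sp B t) (channelBias S Sp A t)) := by
  intro v
  set z := B *ᵥ Sum.elim v g + A
  have hpre : channelWeight S Sp B t *ᵥ embedState Sp g v + channelBias S Sp A t
      = Sum.elim (t⁻¹ • (Sp * S) *ᵥ z) 0 := by
    have hrestore : fromBlocks S 0 0 1 *ᵥ embedState Sp g v = Sum.elim v g := by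
      simp [embedState, fromBlocks_mulVec, mulVec_mulVec, hRightInv]
    have hweight : (Sp * S * B * fromBlocks S 0 0 1) *ᵥ embedState Sp g v
        = (Sp * S) *ᵥ B *ᵥ Sum.elim v g := by
      rw [← hrestore, mulVec_mulVec, mulVec_mulVec]
      rfl
    rw [channelWeight, channelBias, fromRows_mulVec, zero_mulVec, smul_mulVec, hweight,
      ← Sum.elim_add_add, add_zero, ← smul_add, ← mulVec_add]
  rw [resReluLayer, hpre, relu_sumElim, relu_zero, relu_smul_of_nonneg (inv_nonneg.2 ht.le),
    hReluComm, ← mulVec_mulVec]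
  funext k
  cases k <;> simp [embedState, perturbedStep, z, mulVec_add, ht.ne']

end Channel

end

/-- Hidden vectors in `ℝ^{d_h·M}` are indexed by `Fin M × Fin d_h` (grid point, channel);
inputs in `ℝ^{2M}` are indexed by `Fin M ⊕ Fin M`, with `[x; y] = Sum.elim x y`. -/
theorem metaNO_layers_reproduce_perturbed_iteration_general
    (M L dhat : ℕ) (hM : 1 ≤ M) (hL : 1 ≤ L)
    (U0 : Fin M → ℝ)
    (S : Matrix (Fin M) (Fin (dhat * M)) ℝ)
    (Sp : Matrix (Fin (dhat * M)) (Fin M) ℝ)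
    (hRightInv : S * Sp = 1)
    (hReluComm : ∀ z : Fin (dhat * M) → ℝ,
      relu ((Sp * S).mulVec z) = (Sp * S).mulVec (relu z))
    (B : Matrix (Fin (dhat * M)) (Fin M ⊕ Fin M) ℝ)
    (A : Fin (dhat * M) → ℝ)
    (D : Matrix (Fin M) (Fin M) ℝ) :
    ∃ (dh : ℕ), 0 < dh ∧
      ∃ (P : Matrix (Fin M × Fin dh) (Fin M ⊕ Fin M) ℝ)
        (V : Matrix (Fin dh) (Fin dh) ℝ)
        (C : Fin M × Fin dh → ℝ)
        (Q : Matrix (Fin M) (Fin M × Fin dh) ℝ),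
        ∀ G : Fin M → ℝ,
          Q.mulVec
            ((fun Hv : Fin M × Fin dh → ℝ =>
                Hv + (L : ℝ)⁻¹ • relu ((onesMat M ⊗ₖ V).mulVec Hv + C))^[L]
              (P.mulVec (Sum.elim U0 G)))
            =
          (fun Vv : Fin M → ℝ =>
              Vv + S.mulVec (relu (B.mulVec (Sum.elim Vv (D.mulVec G)) + A)))^[L] U0 := by
  have hM0 : (M : ℝ) ≠ 0 := by positivity
  have ht : 0 < (L : ℝ)⁻¹ := by positivity
  let e : Fin (dhat * M + M) ≃ Fin (dhat * M) ⊕ Fin M := finSumFinEquiv.symm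
  refine ⟨dhat * M + M, by omega, (fromBlocks Sp 0 0 D).submatrix (fun p => e p.2) id,
    ((M : ℝ)⁻¹ • channelWeight S Sp B (L : ℝ)⁻¹).submatrix e e,
    broadcast M e (channelBias S Sp A (L : ℝ)⁻¹), gridAverage M e (fromCols S 0), fun G => ?_⟩
  have hchannel := (semiconj_embedState_perturbedStep S Sp B A (D *ᵥ G) ht hRightInv
    hReluComm).iterate_right L U0
  have hgrid := (semiconj_broadcast_resReluLayer M e (L : ℝ)⁻¹
    ((M : ℝ)⁻¹ • channelWeight S Sp B (L : ℝ)⁻¹) (channelBias S Sp A (L : ℝ)⁻¹)).iterate_right L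
  rw [smul_inv_smul₀ hM0] at hgrid
  have hlift : fromBlocks Sp 0 0 D *ᵥ Sum.elim U0 G = embedState Sp (D *ᵥ G) U0 := by
    simp [fromBlocks_mulVec, embedState]
  calc gridAverage M e (fromCols S 0) *ᵥ _
      = gridAverage M e (fromCols S 0) *ᵥ broadcast M e
          ((resReluLayer (L : ℝ)⁻¹ (channelWeight S Sp B (L : ℝ)⁻¹)
            (channelBias S Sp A (L : ℝ)⁻¹))^[L] (embedState Sp (D *ᵥ G) U0)) := by
        rw [submatrix_mulVec_broadcast, hlift, hgrid]
        rfl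
    _ = _ := by
        rw [gridAverage_mulVec_broadcast M e (by omega), ← hchannel,
          fromCols_zero_mulVec_embedState S Sp _ hRightInv]
        rfl

/-- Constructive core of the paper's Theorem 1: an `L`-layer integral neural operator with
lifting matrix `P`, shared residual iterative layers `H ↦ H + (1/L)·ReLU((𝟙_{M×M} ⊗ V)·H + C)`,
and linear projection `Q` exactly reproduces `L` steps of the perturbed fixed-point
iteration `V^{l+1} = V^l + S·ReLU(B·[V^l; D·G] + A)` driven by a shallow ReLU network
`(S, B, A)` and the task-dependent reparameterization `G ↦ D·G`. Hidden vectors in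
`ℝ^{d_h·M}` are indexed by `Fin M × Fin d_h` (grid point, channel); inputs in `ℝ^{2M}` are
indexed by `Fin M ⊕ Fin M`, with `[x; y] = Sum.elim x y`. -/
theorem metaNO_layers_reproduce_perturbed_iteration
    (M L dhat : ℕ) (hM : 1 ≤ M) (hL : 1 ≤ L) (hdhat : 1 ≤ dhat)
    (U0 : Fin M → ℝ)
    (S : Matrix (Fin M) (Fin (dhat * M)) ℝ)
    (Sp : Matrix (Fin (dhat * M)) (Fin M) ℝ)
    (hRightInv : S * Sp = 1)
    (hReluComm : ∀ z : Fin (dhat * M) → ℝ,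
      relu ((Sp * S).mulVec z) = (Sp * S).mulVec (relu z))
    (B : Matrix (Fin (dhat * M)) (Fin M ⊕ Fin M) ℝ)
    (A : Fin (dhat * M) → ℝ)
    (D : Matrix (Fin M) (Fin M) ℝ) :
    ∃ (dh : ℕ), 0 < dh ∧
      ∃ (P : Matrix (Fin M × Fin dh) (Fin M ⊕ Fin M) ℝ)
        (V : Matrix (Fin dh) (Fin dh) ℝ)
        (C : Fin M × Fin dh → ℝ)
        (Q : Matrix (Fin M) (Fin M × Fin dh) ℝ),
        ∀ G : Fin M → ℝ,
          Q.mulVec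
            ((fun Hv : Fin M × Fin dh → ℝ =>
                Hv + (L : ℝ)⁻¹ • relu ((onesMat M ⊗ₖ V).mulVec Hv + C))^[L]
              (P.mulVec (Sum.elim U0 G)))
            =
          (fun Vv : Fin M → ℝ =>
              Vv + S.mulVec (relu (B.mulVec (Sum.elim Vv (D.mulVec G)) + A)))^[L] U0 :=
  metaNO_layers_reproduce_perturbed_iteration_general M L dhat hM hL U0 S Sp hRightInv hReluComm B A
    D
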